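/- Let n ≥ 2 be an integer. Set I'_n := I_n ∪ {0}, L_0 := 1, d_a := 1 for a ∈ I_n and d_0 := 0, and define f(a) := 1 + (q − q^{−1})·q·L_a/(q²·L_a² − 1) for a ∈ I_n, f(0) := 1. Then for every integer ℓ ≥ 1 the following identity holds in F: Σ_{a ∈ I'_n} q^{2n − d_a}·f(a)·((q^{d_a − 2n}·L_a − 1)/(q − q^{−1}))^ℓ·∏_{b ∈ I'_n, b ≠ a} (q^{d_a}·L_a − q^{−d_b}·L_b)/(q^{d_a}·L_a − q^{d_b}·L_b) = Σ_{a ∈ I_n} ((q·L_a − q^{−1}·L_a^{−1} + q − q^{−1})/(L_a − L_a^{−1}))·((q^{1−2n}·L_a − 1)/(q − q^{−1}))^ℓ·P_{n,a} + ((q^{−2n} − 1)/(q − q^{−1}))^ℓ. (This is the type B_n case of the paper's Lemma rewriting the Harish–Chandra image of the order-ℓ quantum Casimir element.) -/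

import Mathlib

/-!
Type `B_n` case of the Lemma rewriting the Harish–Chandra image of the order-`ℓ`
quantum Casimir element.

`K = ℚ(q)` is modelled as `RatFunc ℚ` with `q = RatFunc.X`, and
`F = K(L_1, …, L_n)` is modelled inside the fraction field of the polynomial ring
`K[L_0, L_1, L_2, …]` (only the independent indeterminates `L_1, …, L_n` are used).
For `a ∈ I_n = {-n, …, -1, 1, …, n}` we set `L_{-a} := L_a⁻¹`, and `L_0 := 1`.
-/

noncomputable section

abbrev KK : Type := RatFunc ℚ
abbrev RR : Type := MvPolynomial ℕ KK
abbrev FF : Type := FractionRing RR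

/-- the indeterminate `q`, viewed in `F` -/
def qF : FF := algebraMap RR FF (MvPolynomial.C RatFunc.X)

/-- `L_a` for `a ∈ ℤ`: `L_0 = 1`, `L_a` an indeterminate for `a > 0`,
and `L_a = L_{-a}⁻¹` for `a < 0`. -/
def LF (a : ℤ) : FF :=
  if a = 0 then 1
  else if 0 < a then algebraMap RR FF (MvPolynomial.X a.toNat)
  else (algebraMap RR FF (MvPolynomial.X (-a).toNat))⁻¹

/-- the index set `I_n = {-n, …, -1, 1, …, n}` -/
def In (n : ℕ) : Finset ℤ := (Finset.Icc (-(n : ℤ)) (n : ℤ)).erase 0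

/-- `P_{n,a} = ∏_{b ∈ I_n, b ≠ ±a} (q L_a - q⁻¹ L_b)/(L_a - L_b)` -/
def Pna (n : ℕ) (a : ℤ) : FF :=
  ∏ b ∈ ((In n).erase a).erase (-a), (qF * LF a - qF⁻¹ * LF b) / (LF a - LF b)

/-- `d_a = 1` for `a ∈ I_n` and `d_0 = 0` -/
def dB (a : ℤ) : ℤ := if a = 0 then 0 else 1

/-- `f(a) = 1 + (q - q⁻¹)·q·L_a/(q²·L_a² - 1)` for `a ∈ I_n`, `f(0) = 1` -/
def fB (a : ℤ) : FF :=
  if a = 0 then 1 else 1 + (qF - qF⁻¹) * qF * LF a / (qF ^ 2 * (LF a) ^ 2 - 1)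

set_option synthInstance.maxHeartbeats 1000000
set_option maxHeartbeats 1600000

lemma algFF_ne {p : RR} (hp : p ≠ 0) : algebraMap RR FF p ≠ 0 := by
  exact fun h => hp ((IsFractionRing.to_map_eq_zero_iff (K := FF)).1 h)

lemma mv_ne {p : RR} (v : ℕ → KK) (h : MvPolynomial.eval v p ≠ 0) : p ≠ 0 :=
  fun h0 => h (by rw [h0]; simp)

lemma ratX_sq_ne : (RatFunc.X : KK) ^ 2 - 1 ≠ 0 := by
  intro h
  have h2 : (Polynomial.X : Polynomial ℚ) ^ 2 - 1 = 0 := by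
    apply RatFunc.algebraMap_injective ℚ
    push_cast [map_sub, map_pow, map_one, RatFunc.algebraMap_X]
    simpa using h
  have := congrArg (Polynomial.eval 0) h2
  simp at this

lemma qF_ne : qF ≠ 0 := algFF_ne (by simp [MvPolynomial.C_eq_zero, RatFunc.X_ne_zero])

lemma qF_sq_ne : qF ^ 2 - 1 ≠ 0 := by
  have : qF ^ 2 - 1 = algebraMap RR FF (MvPolynomial.C (RatFunc.X ^ 2 - 1)) := by
    simp [qF, map_sub, map_pow, map_one]
  rw [this]
  exact algFF_ne (by rw [Ne, MvPolynomial.C_eq_zero]; exact ratX_sq_ne)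

lemma sub_inv_ne {x : FF} (hx : x ≠ 0) (h : x ^ 2 - 1 ≠ 0) : x - x⁻¹ ≠ 0 := by
  have : x - x⁻¹ = (x ^ 2 - 1) / x := by field_simp
  rw [this]; exact div_ne_zero h hx

lemma qq_ne : qF - qF⁻¹ ≠ 0 := sub_inv_ne qF_ne qF_sq_ne

-- facts about M m := L of a positive index
def MM (m : ℕ) : FF := algebraMap RR FF (MvPolynomial.X m)

lemma MM_ne (m : ℕ) : MM m ≠ 0 := algFF_ne (MvPolynomial.X_ne_zero m)

lemma MM_sq_ne (m : ℕ) : (MM m) ^ 2 - 1 ≠ 0 := by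
  have : (MM m) ^ 2 - 1 = algebraMap RR FF (MvPolynomial.X m ^ 2 - 1) := by
    simp [MM, map_sub, map_pow, map_one]
  rw [this]
  exact algFF_ne (mv_ne (fun _ => 0) (by simp))

lemma q2M2_ne (m : ℕ) : qF ^ 2 * (MM m) ^ 2 - 1 ≠ 0 := by
  have : qF ^ 2 * (MM m) ^ 2 - 1
      = algebraMap RR FF (MvPolynomial.C (RatFunc.X ^ 2) * MvPolynomial.X m ^ 2 - 1) := by
    simp [MM, qF, map_sub, map_mul, map_pow, map_one]
  rw [this]
  exact algFF_ne (mv_ne (fun _ => 0) (by simp))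

lemma q2_sub_M2_ne (m : ℕ) : qF ^ 2 - (MM m) ^ 2 ≠ 0 := by
  have : qF ^ 2 - (MM m) ^ 2
      = algebraMap RR FF (MvPolynomial.C (RatFunc.X ^ 2) - MvPolynomial.X m ^ 2) := by
    simp [MM, qF, map_sub, map_pow]
  rw [this]
  refine algFF_ne (mv_ne (fun _ => 0) ?_)
  simp [pow_ne_zero, RatFunc.X_ne_zero]

lemma qM_sub_one_ne (m : ℕ) : qF * MM m - 1 ≠ 0 := by
  have : qF * MM m - 1
      = algebraMap RR FF (MvPolynomial.C RatFunc.X * MvPolynomial.X m - 1) := by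
    simp [MM, qF, map_sub, map_mul, map_one]
  rw [this]
  exact algFF_ne (mv_ne (fun _ => 0) (by simp))

lemma q_sub_M_ne (m : ℕ) : qF - MM m ≠ 0 := by
  have : qF - MM m = algebraMap RR FF (MvPolynomial.C RatFunc.X - MvPolynomial.X m) := by
    simp [MM, qF, map_sub]
  rw [this]
  refine algFF_ne (mv_ne (fun _ => 0) ?_)
  simp [RatFunc.X_ne_zero]

lemma LF_zero : LF 0 = 1 := rfl

lemma LF_pos {a : ℤ} (h : 0 < a) : LF a = MM a.toNat := by
  simp [LF, h, h.ne', MM]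

lemma LF_neg' {a : ℤ} (h : a < 0) : LF a = (MM (-a).toNat)⁻¹ := by
  simp [LF, h.ne, not_lt.2 h.le, MM]

lemma LF_neg (a : ℤ) : LF (-a) = (LF a)⁻¹ := by
  rcases lt_trichotomy a 0 with h | h | h
  · rw [LF_neg' h, LF_pos (by omega), inv_inv]
  · simp [h, LF_zero]
  · rw [LF_pos h, LF_neg' (by omega)]
    simp

lemma LF_ne (a : ℤ) : LF a ≠ 0 := by
  rcases lt_trichotomy a 0 with h | h | h
  · rw [LF_neg' h]; exact inv_ne_zero (MM_ne _)
  · simp [h, LF_zero]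
  · rw [LF_pos h]; exact MM_ne _

lemma LF_sq_ne {a : ℤ} (ha : a ≠ 0) : (LF a) ^ 2 - 1 ≠ 0 := by
  rcases lt_trichotomy a 0 with h | h | h
  · rw [LF_neg' h]
    set M := MM (-a).toNat with hM
    have hMne := MM_ne (-a).toNat
    have : (M⁻¹) ^ 2 - 1 = -((M ^ 2 - 1) / M ^ 2) := by have hM0 : M ≠ 0 := hMne; field_simp; ring
    rw [this]
    exact neg_ne_zero.2 (div_ne_zero (MM_sq_ne _) (pow_ne_zero _ hMne))
  · exact absurd h ha
  · rw [LF_pos h]; exact MM_sq_ne _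

lemma LL_ne {a : ℤ} (ha : a ≠ 0) : LF a - (LF a)⁻¹ ≠ 0 :=
  sub_inv_ne (LF_ne a) (LF_sq_ne ha)

lemma q2L2_ne {a : ℤ} (ha : a ≠ 0) : qF ^ 2 * (LF a) ^ 2 - 1 ≠ 0 := by
  rcases lt_trichotomy a 0 with h | h | h
  · rw [LF_neg' h]
    set M := MM (-a).toNat with hM
    have hMne := MM_ne (-a).toNat
    have : qF ^ 2 * (M⁻¹) ^ 2 - 1 = (qF ^ 2 - M ^ 2) / M ^ 2 := by have hM0 : M ≠ 0 := hMne; field_simp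
    rw [this]
    exact div_ne_zero (q2_sub_M2_ne _) (pow_ne_zero _ hMne)
  · exact absurd h ha
  · rw [LF_pos h]; exact q2M2_ne _

lemma qL_sub_one_ne {a : ℤ} (ha : a ≠ 0) : qF * LF a - 1 ≠ 0 := by
  rcases lt_trichotomy a 0 with h | h | h
  · rw [LF_neg' h]
    set M := MM (-a).toNat with hM
    have hMne := MM_ne (-a).toNat
    have : qF * M⁻¹ - 1 = (qF - M) / M := by have hM0 : M ≠ 0 := hMne; field_simp
    rw [this]
    exact div_ne_zero (q_sub_M_ne _) hMne
  · exact absurd h ha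
  · rw [LF_pos h]; exact qM_sub_one_ne _

lemma mem_In {n : ℕ} {a : ℤ} : a ∈ In n ↔ a ≠ 0 ∧ -(n : ℤ) ≤ a ∧ a ≤ n := by
  simp [In, Finset.mem_erase, Finset.mem_Icc, and_assoc]

lemma zero_not_mem_In (n : ℕ) : (0 : ℤ) ∉ In n := by simp [mem_In]

lemma neg_mem_In {n : ℕ} {a : ℤ} (h : a ∈ In n) : -a ∈ In n := by
  rw [mem_In] at h ⊢; omega

lemma card_In (n : ℕ) : (In n).card = 2 * n := by
  rw [In, Finset.card_erase_of_mem (by simp), Int.card_Icc]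
  omega

lemma In_succ (n : ℕ) :
    In (n + 1) = insert ((n : ℤ) + 1) (insert (-(n : ℤ) - 1) (In n)) := by
  ext x
  simp only [mem_In, Finset.mem_insert]
  push_cast
  omega

lemma pairB {L : FF} (hL : L ≠ 0) (h1 : 1 - qF * L ≠ 0) (h2 : L - qF ≠ 0) :
    (1 - qF⁻¹ * L) / (1 - qF * L) * ((1 - qF⁻¹ * L⁻¹) / (1 - qF * L⁻¹)) = (qF ^ 2)⁻¹ := by
  have hq := qF_ne
  have h3 : 1 - qF * L⁻¹ = (L - qF) / L := by field_simp
  have hD : 1 - qF * L⁻¹ ≠ 0 := by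
    rw [h3]; exact div_ne_zero h2 hL
  rw [div_mul_div_comm, div_eq_iff (mul_ne_zero h1 hD)]
  field_simp
  ring

lemma one_sub_qM_ne (m : ℕ) : 1 - qF * MM m ≠ 0 := by
  intro h
  exact qM_sub_one_ne m (by linear_combination -h)

lemma M_sub_q_ne (m : ℕ) : MM m - qF ≠ 0 := by
  intro h
  exact q_sub_M_ne m (by linear_combination -h)

lemma prod0 (n : ℕ) :
    ∏ b ∈ In n, (1 - qF⁻¹ * LF b) / (1 - qF * LF b) = ((qF ^ 2)⁻¹) ^ n := by
  induction n with
  | zero => simp [In]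
  | succ n ih =>
    rw [In_succ]
    have h1 : ((n : ℤ) + 1) ∉ insert (-(n : ℤ) - 1) (In n) := by
      intro hmem
      simp only [Finset.mem_insert, mem_In] at hmem
      omega
    have h2 : (-(n : ℤ) - 1) ∉ In n := by
      intro hmem
      rw [mem_In] at hmem
      omega
    rw [Finset.prod_insert h1, Finset.prod_insert h2, ih]
    have hL : LF ((n : ℤ) + 1) = MM (n + 1) := by
      rw [LF_pos (by omega)]; norm_num
    have hLn : LF (-(n : ℤ) - 1) = (MM (n + 1))⁻¹ := by
      rw [LF_neg' (by omega)]
      have : (-(-(n : ℤ) - 1)).toNat = n + 1 := by omega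
      rw [this]
    rw [hL, hLn, ← mul_assoc, pairB (MM_ne (n+1)) (one_sub_qM_ne (n+1)) (M_sub_q_ne (n+1))]
    ring

lemma keyB {L : FF} (hL : L ≠ 0) (hL2 : L ^ 2 - 1 ≠ 0) (hqL2 : qF ^ 2 * L ^ 2 - 1 ≠ 0) :
    (1 + (qF - qF⁻¹) * qF * L / (qF ^ 2 * L ^ 2 - 1)) * (qF * L - qF⁻¹ * L⁻¹)
      = qF * L - qF⁻¹ * L⁻¹ + qF - qF⁻¹ := by
  have hq := qF_ne
  field_simp
  ring

lemma div_qF_mul (x y : FF) : x / (qF * y) = qF⁻¹ * (x / y) := by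
  rw [div_eq_mul_inv, mul_inv, div_eq_mul_inv]; ring

lemma term0 (n : ℕ) (ℓ : ℕ) :
    qF ^ (2 * (n : ℤ) - dB 0) * fB 0 *
        ((qF ^ (dB 0 - 2 * (n : ℤ)) * LF 0 - 1) / (qF - qF⁻¹)) ^ ℓ *
        ∏ b ∈ (insert 0 (In n)).erase 0,
          (qF ^ dB 0 * LF 0 - qF ^ (-dB b) * LF b) / (qF ^ dB 0 * LF 0 - qF ^ dB b * LF b)
      = ((qF ^ (-(2 * (n : ℤ))) - 1) / (qF - qF⁻¹)) ^ ℓ := by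
  rw [Finset.erase_insert (zero_not_mem_In n)]
  have hprod : (∏ b ∈ In n,
      (qF ^ dB 0 * LF 0 - qF ^ (-dB b) * LF b) / (qF ^ dB 0 * LF 0 - qF ^ dB b * LF b))
      = ((qF ^ 2)⁻¹) ^ n := by
    rw [← prod0 n]
    refine Finset.prod_congr rfl fun b hb => ?_
    have hb0 : b ≠ 0 := (mem_In.1 hb).1
    simp [dB, hb0, LF_zero, zpow_neg]
  rw [hprod]
  simp only [show dB 0 = 0 from rfl, show fB 0 = 1 from if_pos rfl, LF_zero, mul_one,
    zero_sub, sub_zero]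
  have hq2 : qF ^ (2 * (n : ℤ)) * ((qF ^ 2)⁻¹) ^ n = 1 := by
    have h1 : qF ^ (2 * (n : ℤ)) = qF ^ (2 * n) := by
      rw [← zpow_natCast]; push_cast; ring_nf
    have h2 : ((qF ^ 2)⁻¹) ^ n = (qF ^ (2 * n))⁻¹ := by
      rw [inv_pow, ← pow_mul]
    rw [h1, h2, mul_inv_cancel₀ (pow_ne_zero _ qF_ne)]
  set A := qF ^ (2 * (n : ℤ)) with hA
  set B := ((qF ^ 2)⁻¹) ^ n with hB
  rw [mul_comm A, mul_assoc, hq2, mul_one]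

lemma terma (n : ℕ) (hn : 1 ≤ n) (ℓ : ℕ) {a : ℤ} (ha : a ∈ In n) :
    qF ^ (2 * (n : ℤ) - dB a) * fB a *
        ((qF ^ (dB a - 2 * (n : ℤ)) * LF a - 1) / (qF - qF⁻¹)) ^ ℓ *
        ∏ b ∈ (insert 0 (In n)).erase a,
          (qF ^ dB a * LF a - qF ^ (-dB b) * LF b) / (qF ^ dB a * LF a - qF ^ dB b * LF b)
      = ((qF * LF a - qF⁻¹ * (LF a)⁻¹ + qF - qF⁻¹) / (LF a - (LF a)⁻¹)) *
          ((qF ^ (1 - 2 * (n : ℤ)) * LF a - 1) / (qF - qF⁻¹)) ^ ℓ * Pna n a := by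
  have ha0 : a ≠ 0 := (mem_In.1 ha).1
  have hdB : dB a = 1 := if_neg ha0
  rw [hdB]
  have hnegmem : -a ∈ (In n).erase a := Finset.mem_erase.2 ⟨by omega, neg_mem_In ha⟩
  have hprod : (∏ b ∈ (insert 0 (In n)).erase a,
      (qF ^ (1 : ℤ) * LF a - qF ^ (-dB b) * LF b) / (qF ^ (1 : ℤ) * LF a - qF ^ dB b * LF b))
      = qF⁻¹ * ((qF * LF a - qF⁻¹ * (LF a)⁻¹) / (LF a - (LF a)⁻¹))
        * (qF⁻¹ ^ (2 * n - 2) * Pna n a) := by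
    rw [Finset.erase_insert_of_ne (Ne.symm ha0),
      Finset.prod_insert (fun h => zero_not_mem_In n (Finset.mem_of_mem_erase h)),
      ← Finset.insert_erase hnegmem, Finset.prod_insert (Finset.notMem_erase _ _)]
    have h0 : (qF ^ (1 : ℤ) * LF a - qF ^ (-dB 0) * LF 0) / (qF ^ (1 : ℤ) * LF a - qF ^ dB 0 * LF 0)
        = 1 := by
      simp only [show dB 0 = 0 from rfl, LF_zero, neg_zero, zpow_zero, zpow_one, mul_one]
      exact div_self (qL_sub_one_ne ha0)
    have hneg : (qF ^ (1 : ℤ) * LF a - qF ^ (-dB (-a)) * LF (-a))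
          / (qF ^ (1 : ℤ) * LF a - qF ^ dB (-a) * LF (-a))
        = qF⁻¹ * ((qF * LF a - qF⁻¹ * (LF a)⁻¹) / (LF a - (LF a)⁻¹)) := by
      have h1 : dB (-a) = 1 := if_neg (by omega)
      rw [h1, LF_neg, zpow_one, zpow_neg_one, show qF * LF a - qF * (LF a)⁻¹
        = qF * (LF a - (LF a)⁻¹) from (mul_sub _ _ _).symm, div_qF_mul]
    have hS : (∏ b ∈ ((In n).erase a).erase (-a),
        (qF ^ (1 : ℤ) * LF a - qF ^ (-dB b) * LF b) / (qF ^ (1 : ℤ) * LF a - qF ^ dB b * LF b))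
        = qF⁻¹ ^ (2 * n - 2) * Pna n a := by
      have hcard : (((In n).erase a).erase (-a)).card = 2 * n - 2 := by
        rw [Finset.card_erase_of_mem hnegmem,
          Finset.card_erase_of_mem (Finset.mem_erase.1 hnegmem |>.2 |> (fun _ => ha)),
          card_In]
        omega
      rw [Pna, ← hcard, ← Finset.prod_const (qF⁻¹), ← Finset.prod_mul_distrib]
      refine Finset.prod_congr rfl fun b hb => ?_
      have hb0 : b ≠ 0 := (mem_In.1 (Finset.mem_of_mem_erase (Finset.mem_of_mem_erase hb))).1
      have h1 : dB b = 1 := if_neg hb0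
      rw [h1, zpow_one, zpow_neg_one, show qF * LF a - qF * LF b
        = qF * (LF a - LF b) from (mul_sub _ _ _).symm, div_qF_mul]
    rw [h0, hneg, hS, one_mul]
  rw [hprod, fB, if_neg ha0]
  have hpow : qF ^ (2 * (n : ℤ) - 1) * (qF⁻¹ * qF⁻¹ ^ (2 * n - 2)) = 1 := by
    have h1 : qF ^ (2 * (n : ℤ) - 1) = qF ^ (2 * n - 1) := by
      rw [← zpow_natCast]; congr 1; omega
    have h2 : qF⁻¹ * qF⁻¹ ^ (2 * n - 2) = (qF ^ (2 * n - 1))⁻¹ := by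
      have h3 : 2 * n - 2 + 1 = 2 * n - 1 := by omega
      rw [← pow_succ', h3, inv_pow]
    rw [h1, h2, mul_inv_cancel₀ (pow_ne_zero _ qF_ne)]
  have hkey := keyB (LF_ne a) (LF_sq_ne ha0) (q2L2_ne ha0)
  set Q1 := qF ^ (2 * (n : ℤ) - 1) with hQ1
  set P := ((qF ^ (1 - 2 * (n : ℤ)) * LF a - 1) / (qF - qF⁻¹)) ^ ℓ with hPdef
  set X := LF a with hX
  linear_combination
    ((X - X⁻¹)⁻¹ * P * Pna n a *
        (1 + (qF - qF⁻¹) * qF * X / (qF ^ 2 * X ^ 2 - 1)) * (qF * X - qF⁻¹ * X⁻¹)) * hpow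
      + ((X - X⁻¹)⁻¹ * P * Pna n a) * hkey


theorem typeB_casimir_HC_image_rewrite (n : ℕ) (hn : 2 ≤ n) (ℓ : ℕ) (hℓ : 1 ≤ ℓ) :
    ∑ a ∈ insert 0 (In n),
        qF ^ (2 * (n : ℤ) - dB a) * fB a *
          ((qF ^ (dB a - 2 * (n : ℤ)) * LF a - 1) / (qF - qF⁻¹)) ^ ℓ *
          ∏ b ∈ (insert 0 (In n)).erase a,
            (qF ^ dB a * LF a - qF ^ (-dB b) * LF b) / (qF ^ dB a * LF a - qF ^ dB b * LF b)
    = (∑ a ∈ In n,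
          ((qF * LF a - qF⁻¹ * (LF a)⁻¹ + qF - qF⁻¹) / (LF a - (LF a)⁻¹)) *
            ((qF ^ (1 - 2 * (n : ℤ)) * LF a - 1) / (qF - qF⁻¹)) ^ ℓ * Pna n a)
        + ((qF ^ (-(2 * (n : ℤ))) - 1) / (qF - qF⁻¹)) ^ ℓ := by
  rw [Finset.sum_insert (zero_not_mem_In n), term0 n ℓ, add_comm]
  congr 1
  exact Finset.sum_congr rfl fun a ha => terma n (by omega) ℓ ha
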